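/- Let G = (V, E) be a finite directed graph with a designated source s ∈ V from which every vertex is reachable. For i ≥ 1, let L_i be the set of vertices of V ∖ {s} whose hop-distance from s is exactly i, and let d − 1 be the maximum hop-distance from s to any vertex. Then ℓ(G, s) ≥ ∏_{i=1}^{d−1} (|L_i|)!, where ℓ(G, s) is the number of linearizations of (G, s). -/

import Mathlib

variable {V : Type*}

/-- `p` is a directed walk from `s` to `v` in the digraph with edge relation `E`:
`p` is the (nonempty) list of visited vertices, starting at `s`, ending at `v`,
and each consecutive pair of vertices is an edge. -/
def IsWalk (E : V → V → Prop) (s v : V) (p : List V) : Prop :=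
  p.Chain' E ∧ p.head? = some s ∧ p.getLast? = some v

/-- `v` is reachable from `s` by a directed walk. -/
def DiReachable (E : V → V → Prop) (s v : V) : Prop :=
  ∃ p, IsWalk E s v p

/-- Hop-distance from `s` to `v`: the minimum number of edges on a directed path
(equivalently, walk) from `s` to `v`.  A walk on `k + 1` vertices has `k` edges. -/
noncomputable def hopDist (E : V → V → Prop) (s v : V) : ℕ :=
  sInf {k | ∃ p, IsWalk E s v p ∧ p.length = k + 1}

/-- The total weight of a walk `p` under the edge weighting `w`:
the sum of `w` over the consecutive pairs of vertices of `p`. -/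
def walkWeight (w : V → V → ℝ) (p : List V) : ℝ :=
  ((p.zip p.tail).map fun e => w e.1 e.2).sum

/-- Weighted distance from `s` to `v` under the weighting `w`:
the minimum total weight of a directed path from `s` to `v`. -/
noncomputable def weightedDist (E : V → V → Prop) (w : V → V → ℝ) (s v : V) : ℝ :=
  sInf {c | ∃ p, IsWalk E s v p ∧ p.Nodup ∧ walkWeight w p = c}

/-- `L` is a linearization of `(G, s)`: `L` is a linear ordering (a duplicate-free list)
of `V \ {s}`, and there exists a positive edge weighting `w` of `G` such that the weighted
distances from `s` of all vertices `≠ s` are pairwise distinct and `L` lists `V \ {s}`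
in increasing order of weighted distance from `s`. -/
def IsLinearization (E : V → V → Prop) (s : V) (L : List V) : Prop :=
  L.Nodup ∧ (∀ v, v ∈ L ↔ v ≠ s) ∧
  ∃ w : V → V → ℝ,
    (∀ u v, E u v → 0 < w u v) ∧
    (∀ x, x ≠ s → ∀ y, y ≠ s → x ≠ y →
      weightedDist E w s x ≠ weightedDist E w s y) ∧
    L.Pairwise (fun x y => weightedDist E w s x < weightedDist E w s y)

/-- `ℓ(G, s)`: the number of linearizations of `(G, s)`. -/
noncomputable def numLinearizations (E : V → V → Prop) (s : V) : ℕ :=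
  {L : List V | IsLinearization E s L}.ncard

/-- `T` is a spanning arborescence of `(G, s)`: a subset of the edges of `G` such that
every vertex `v ≠ s` is reachable from `s` in `T` and has exactly one incoming `T`-edge,
and `s` has no incoming `T`-edge. -/
def IsArborescence (E T : V → V → Prop) (s : V) : Prop :=
  (∀ u v, T u v → E u v) ∧
  (∀ u, ¬ T u s) ∧
  (∀ v, v ≠ s → DiReachable T s v ∧ ∃! u, T u v)

section WW

lemma walkWeight_singleton (w : V → V → ℝ) (x : V) : walkWeight w [x] = 0 := by
  simp [walkWeight]

lemma walkWeight_cons_cons (w : V → V → ℝ) (x y : V) (t : List V) :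
    walkWeight w (x :: y :: t) = w x y + walkWeight w (y :: t) := by
  simp [walkWeight]

lemma telescope_eq (w : V → V → ℝ) (φ : V → ℝ) :
    ∀ (p : List V), p.Chain' (fun a b => w a b = φ b - φ a) →
      ∀ a b, p.head? = some a → p.getLast? = some b → walkWeight w p = φ b - φ a := by
  intro p
  induction p with
  | nil => intro _ a b ha _; simp at ha
  | cons x xs ih =>
    cases xs with
    | nil =>
      intro _ a b ha hb
      simp only [List.head?_cons, Option.some.injEq] at ha
      simp only [List.getLast?_singleton, Option.some.injEq] at hb
      subst ha; subst hb
      simp [walkWeight_singleton]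
    | cons y t =>
      intro hc a b ha hb
      simp only [List.Chain'] at hc
      rw [List.isChain_cons_cons] at hc
      simp only [List.head?_cons, Option.some.injEq] at ha
      rw [List.getLast?_cons_cons] at hb
      have h2 := ih hc.2 y b rfl hb
      rw [walkWeight_cons_cons, h2, hc.1]
      subst ha; ring

lemma telescope_le (w : V → V → ℝ) (φ : V → ℝ) (hw : ∀ x y, φ y - φ x ≤ w x y) :
    ∀ (p : List V), ∀ a b, p.head? = some a → p.getLast? = some b →
      φ b - φ a ≤ walkWeight w p := by
  intro p
  induction p with
  | nil => intro a b ha _; simp at ha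
  | cons x xs ih =>
    cases xs with
    | nil =>
      intro a b ha hb
      simp only [List.head?_cons, Option.some.injEq] at ha
      simp only [List.getLast?_singleton, Option.some.injEq] at hb
      subst ha; subst hb
      simp [walkWeight_singleton]
    | cons y t =>
      intro a b ha hb
      simp only [List.head?_cons, Option.some.injEq] at ha
      rw [List.getLast?_cons_cons] at hb
      have h2 := ih y b rfl hb
      rw [walkWeight_cons_cons]
      have := hw a y
      subst ha
      linarith

end WW

section Hop

variable (E : V → V → Prop) (s : V)

lemma isWalk_singleton : IsWalk E s s [s] := by
  refine ⟨List.isChain_singleton s, rfl, rfl⟩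

lemma walk_ne_nil {v : V} {p : List V} (h : IsWalk E s v p) : p ≠ [] := by
  rintro rfl; simp [IsWalk] at h

lemma walk_length_pos {v : V} {p : List V} (h : IsWalk E s v p) : 1 ≤ p.length :=
  List.length_pos_iff.mpr (walk_ne_nil E s h)

lemma hop_le {v : V} {p : List V} (h : IsWalk E s v p) :
    hopDist E s v + 1 ≤ p.length := by
  have h1 := walk_length_pos E s h
  have : p.length - 1 ∈ {k | ∃ p, IsWalk E s v p ∧ p.length = k + 1} :=
    ⟨p, h, by omega⟩
  have := Nat.sInf_le this
  unfold hopDist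
  omega

lemma exists_walk_hop (hreach : ∀ v, DiReachable E s v) (v : V) :
    ∃ p, IsWalk E s v p ∧ p.length = hopDist E s v + 1 := by
  obtain ⟨p, hp⟩ := hreach v
  have h1 := walk_length_pos E s hp
  have hne : {k | ∃ p, IsWalk E s v p ∧ p.length = k + 1}.Nonempty :=
    ⟨p.length - 1, p, hp, by omega⟩
  exact Nat.sInf_mem hne

lemma hop_self : hopDist E s s = 0 := by
  have := hop_le E s (isWalk_singleton E s)
  simp at this
  omega

lemma hop_pos {v : V} (hreach : ∀ v, DiReachable E s v) (hv : v ≠ s) :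
    1 ≤ hopDist E s v := by
  by_contra h
  have h0 : hopDist E s v = 0 := by omega
  obtain ⟨p, hp, hlen⟩ := exists_walk_hop E s hreach v
  rw [h0] at hlen
  obtain ⟨x, rfl⟩ := List.length_eq_one_iff.mp hlen
  obtain ⟨_, h2, h3⟩ := hp
  simp only [List.head?_cons, Option.some.injEq] at h2
  simp only [List.getLast?_singleton, Option.some.injEq] at h3
  exact hv (h3 ▸ h2 ▸ rfl)

lemma walk_concat {u v : V} {p : List V} (hp : IsWalk E s u p) (he : E u v) :
    IsWalk E s v (p ++ [v]) := by
  obtain ⟨h1, h2, h3⟩ := hp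
  refine ⟨?_, ?_, List.getLast?_concat⟩
  · simp only [List.Chain']
    rw [List.isChain_append]
    refine ⟨h1, List.isChain_singleton v, ?_⟩
    intro x hx y hy
    rw [h3] at hx
    simp only [Option.mem_def, Option.some.injEq] at hx
    simp only [List.head?_cons, Option.mem_def, Option.some.injEq] at hy
    subst hx; subst hy; exact he
  · rw [List.head?_append, h2]; rfl

lemma hop_step (hreach : ∀ v, DiReachable E s v) {u v : V} (he : E u v) :
    hopDist E s v ≤ hopDist E s u + 1 := by
  obtain ⟨p, hp, hlen⟩ := exists_walk_hop E s hreach u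
  have := hop_le E s (walk_concat E s hp he)
  simp only [List.length_append, List.length_cons, List.length_nil] at this
  omega

lemma exists_geodesic (hreach : ∀ v, DiReachable E s v) :
    ∀ (k : ℕ) (v : V), hopDist E s v = k →
      ∃ p, IsWalk E s v p ∧
        p.Chain' (fun a b => hopDist E s b = hopDist E s a + 1) := by
  intro k
  induction k with
  | zero =>
    intro v hv
    obtain ⟨p, hp, hlen⟩ := exists_walk_hop E s hreach v
    rw [hv] at hlen
    obtain ⟨x, rfl⟩ := List.length_eq_one_iff.mp hlen
    obtain ⟨_, h2, h3⟩ := hp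
    simp only [List.head?_cons, Option.some.injEq] at h2
    simp only [List.getLast?_singleton, Option.some.injEq] at h3
    have hvs : v = s := by rw [← h3, h2]
    subst hvs
    exact ⟨[v], ⟨List.isChain_singleton _, rfl, rfl⟩, List.isChain_singleton _⟩
  | succ k ih =>
    intro v hv
    obtain ⟨p, hp, hlen⟩ := exists_walk_hop E s hreach v
    rw [hv] at hlen
    have hpne : p ≠ [] := walk_ne_nil E s hp
    set q := p.dropLast with hq
    have hqlen : q.length = k + 1 := by rw [hq, List.length_dropLast, hlen]; omega
    have hqne : q ≠ [] := by
      intro h; rw [h] at hqlen; simp at hqlen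
    set u := q.getLast hqne with hu
    have hpq : p = q ++ [v] := by
      have h1 := List.dropLast_concat_getLast hpne
      have h2 : p.getLast hpne = v := by
        have := List.getLast?_eq_getLast hpne
        rw [hp.2.2] at this
        exact (Option.some.injEq _ _ ▸ this.symm)
      rw [← h1, h2]
    obtain ⟨hc, hh, _⟩ := hp
    simp only [List.Chain'] at hc
    rw [hpq, List.isChain_append] at hc
    have hEuv : E u v := by
      refine hc.2.2 u ?_ v ?_
      · rw [List.getLast?_eq_getLast hqne]; rfl
      · rfl
    have hqwalk : IsWalk E s u q := by
      refine ⟨hc.1, ?_, List.getLast?_eq_getLast hqne⟩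
      have hqhead : q.head? = some (q.head hqne) := List.head?_eq_head hqne
      rw [hpq, List.head?_append, hqhead] at hh
      simp only [List.head?_cons, Option.or] at hh
      rw [hqhead, hh]
    have hule : hopDist E s u + 1 ≤ k + 1 := by
      have := hop_le E s hqwalk; omega
    have huge : hopDist E s v ≤ hopDist E s u + 1 := hop_step E s hreach hEuv
    have huk : hopDist E s u = k := by omega
    obtain ⟨q', hq'w, hq'c⟩ := ih u huk
    refine ⟨q' ++ [v], walk_concat E s hq'w hEuv, ?_⟩
    simp only [List.Chain']
    rw [List.isChain_append]
    refine ⟨hq'c, List.isChain_singleton _, ?_⟩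
    intro x hx y hy
    rw [hq'w.2.2] at hx
    simp only [Option.mem_def, Option.some.injEq] at hx
    simp only [List.head?_cons, Option.mem_def, Option.some.injEq] at hy
    subst hx; subst hy
    rw [huk, hv]

end Hop

section Main

variable (E : V → V → Prop) (s : V)

lemma isLinearization_of_sorted (hreach : ∀ v, DiReachable E s v)
    (L : List V) (hnd : L.Nodup) (hmem : ∀ v, v ∈ L ↔ v ≠ s)
    (hsort : L.Pairwise fun x y => hopDist E s x ≤ hopDist E s y) :
    IsLinearization E s L := by
  classical
  set N : ℝ := 2 * (L.length + 1) with hN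
  have hNpos : (0 : ℝ) < N := by positivity
  set φ : V → ℝ := fun v =>
    if v = s then 0 else (hopDist E s v : ℝ) + (List.idxOf v L : ℝ) / N with hφ
  set w : V → V → ℝ := fun u v => max (φ v - φ u) (1/2) with hw
  have idx_bound : ∀ v : V, 0 ≤ (List.idxOf v L : ℝ) / N ∧
      (List.idxOf v L : ℝ) / N < 1/2 := by
    intro v
    have h1 : List.idxOf v L ≤ L.length := List.idxOf_le_length
    constructor
    · positivity
    · rw [div_lt_iff₀ hNpos]
      push_cast
      have : (List.idxOf v L : ℝ) ≤ L.length := by exact_mod_cast h1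
      nlinarith
  have hedge : ∀ a b : V, hopDist E s b = hopDist E s a + 1 → w a b = φ b - φ a := by
    intro a b hab
    have hbs : b ≠ s := by
      intro h; rw [h, hop_self] at hab; omega
    have key : (1:ℝ)/2 ≤ φ b - φ a := by
      obtain ⟨hb0, hb1⟩ := idx_bound b
      obtain ⟨ha0, ha1⟩ := idx_bound a
      by_cases has : a = s
      · have : hopDist E s b = 1 := by rw [hab, has, hop_self]
        simp only [hφ, has, if_pos rfl, if_neg hbs, this]
        push_cast
        linarith
      · simp only [hφ, if_neg hbs, if_neg has, hab]
        push_cast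
        linarith
    exact max_eq_left key
  have hwge : ∀ x y : V, φ y - φ x ≤ w x y := fun x y => le_max_left _ _
  have dist_eq : ∀ v : V, weightedDist E w s v = φ v := by
    intro v
    obtain ⟨p, hpw, hpc⟩ := exists_geodesic E s hreach (hopDist E s v) v rfl
    have hpweq : walkWeight w p = φ v - φ s := by
      refine telescope_eq w φ p ?_ s v hpw.2.1 hpw.2.2
      exact hpc.imp (fun {a b} h => hedge a b h)
    have hφs : φ s = 0 := by simp [hφ]
    have hnodup : p.Nodup := by
      have hlt : p.Chain' (fun a b => hopDist E s a < hopDist E s b) :=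
        hpc.imp (fun {a b} h => by omega)
      haveI : IsTrans V (fun a b => hopDist E s a < hopDist E s b) :=
        ⟨fun _ _ _ h1 h2 => h1.trans h2⟩
      have := List.isChain_iff_pairwise.mp hlt
      exact this.imp (fun {a b} h => fun e => by subst e; exact lt_irrefl _ h)
    have hmemC : φ v ∈ {c | ∃ p, IsWalk E s v p ∧ p.Nodup ∧ walkWeight w p = c} :=
      ⟨p, hpw, hnodup, by rw [hpweq, hφs]; ring⟩
    have hlb : ∀ c ∈ {c | ∃ p, IsWalk E s v p ∧ p.Nodup ∧ walkWeight w p = c},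
        φ v ≤ c := by
      rintro c ⟨p', hp'w, _, rfl⟩
      have := telescope_le w φ hwge p' s v hp'w.2.1 hp'w.2.2
      rw [hφs] at this
      linarith
    exact le_antisymm (csInf_le ⟨φ v, hlb⟩ hmemC) (le_csInf ⟨_, hmemC⟩ hlb)
  have hφlt : ∀ x y : V, x ≠ s → y ≠ s →
      (hopDist E s x < hopDist E s y ∨
        (hopDist E s x = hopDist E s y ∧ List.idxOf x L < List.idxOf y L)) →
      φ x < φ y := by
    intro x y hx hy h
    obtain ⟨hx0, hx1⟩ := idx_bound x
    obtain ⟨hy0, hy1⟩ := idx_bound y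
    simp only [hφ, if_neg hx, if_neg hy]
    rcases h with h | ⟨h1, h2⟩
    · have : (hopDist E s x : ℝ) + 1 ≤ (hopDist E s y : ℝ) := by exact_mod_cast h
      linarith
    · rw [h1]
      have hlt : (List.idxOf x L : ℝ) < List.idxOf y L := by exact_mod_cast h2
      gcongr
  refine ⟨hnd, hmem, w, ?_, ?_, ?_⟩
  · intro u v _
    calc (0:ℝ) < 1/2 := by norm_num
    _ ≤ w u v := le_max_right _ _
  · intro x hx y hy hxy
    rw [dist_eq, dist_eq]
    have hxL : x ∈ L := (hmem x).mpr hx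
    have hyL : y ∈ L := (hmem y).mpr hy
    have hidx : List.idxOf x L ≠ List.idxOf y L := by
      intro h; exact hxy ((List.idxOf_inj hxL).mp h)
    rcases lt_trichotomy (hopDist E s x) (hopDist E s y) with h | h | h
    · exact ne_of_lt (hφlt x y hx hy (Or.inl h))
    · rcases lt_or_gt_of_ne hidx with h2 | h2
      · exact ne_of_lt (hφlt x y hx hy (Or.inr ⟨h, h2⟩))
      · exact ne_of_gt (hφlt y x hy hx (Or.inr ⟨h.symm, h2⟩))
    · exact ne_of_gt (hφlt y x hy hx (Or.inl h))
  · rw [List.pairwise_iff_getElem]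
    intro i j hi hj hij
    rw [dist_eq, dist_eq]
    have hxL : L[i] ∈ L := List.getElem_mem hi
    have hyL : L[j] ∈ L := List.getElem_mem hj
    have hx : L[i] ≠ s := (hmem _).mp hxL
    have hy : L[j] ≠ s := (hmem _).mp hyL
    have hhop : hopDist E s L[i] ≤ hopDist E s L[j] :=
      List.pairwise_iff_getElem.mp hsort i j hi hj hij
    have hidx : List.idxOf L[i] L < List.idxOf L[j] L := by
      rw [hnd.idxOf_getElem i hi, hnd.idxOf_getElem j hj]
      exact hij
    rcases lt_or_eq_of_le hhop with h | h
    · exact hφlt _ _ hx hy (Or.inl h)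
    · exact hφlt _ _ hx hy (Or.inr ⟨h, hidx⟩)

end Main

section Count

variable [DecidableEq V]

def concatF : List (List V) → Finset (List V)
  | [] => {[]}
  | b :: bs => (b.permutations.toFinset ×ˢ concatF bs).image fun p => p.1 ++ p.2

lemma card_concatF : ∀ (bs : List (List V)), (∀ b ∈ bs, b.Nodup) →
    (concatF bs).card = (bs.map fun b => b.length.factorial).prod := by
  intro bs
  induction bs with
  | nil => intro _; simp [concatF]
  | cons b bs ih =>
    intro hnd
    have hb : b.Nodup := hnd b (List.mem_cons_self)
    rw [concatF, Finset.card_image_of_injOn, Finset.card_product]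
    · rw [List.toFinset_card_of_nodup (List.nodup_permutations b hb),
        List.length_permutations, ih (fun l hl => hnd l (List.mem_cons_of_mem b hl))]
      simp
    · rintro ⟨a₁, c₁⟩ h₁ ⟨a₂, c₂⟩ h₂ heq
      simp only [Finset.coe_product, Set.mem_prod, Finset.mem_coe, List.mem_toFinset,
        List.mem_permutations] at h₁ h₂
      simp only at heq
      have hlen : a₁.length = a₂.length := by
        rw [h₁.1.length_eq, h₂.1.length_eq]
      obtain ⟨h3, h4⟩ := List.append_inj heq hlen
      simp [h3, h4]

lemma mem_concatF : ∀ (bs : List (List V)) (L : List V), L ∈ concatF bs →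
    ∃ as : List (List V), List.Forall₂ List.Perm as bs ∧ L = as.flatten := by
  intro bs
  induction bs with
  | nil =>
    intro L hL
    simp only [concatF, Finset.mem_singleton] at hL
    exact ⟨[], List.Forall₂.nil, by simp [hL]⟩
  | cons b bs ih =>
    intro L hL
    simp only [concatF, Finset.mem_image, Finset.mem_product] at hL
    obtain ⟨⟨a, c⟩, ⟨ha, hc⟩, heq⟩ := hL
    rw [List.mem_toFinset, List.mem_permutations] at ha
    obtain ⟨as, h₂, rfl⟩ := ih c hc
    exact ⟨a :: as, List.Forall₂.cons ha h₂, by simp [← heq]⟩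

lemma forall₂_mem_left {α β : Type*} {R : α → β → Prop} :
    ∀ {as : List α} {bs : List β}, List.Forall₂ R as bs → ∀ a ∈ as, ∃ b ∈ bs, R a b := by
  intro as bs h
  induction h with
  | nil => intro a ha; simp at ha
  | cons hab h ih =>
    intro x hx
    rcases List.mem_cons.mp hx with rfl | hx
    · exact ⟨_, List.mem_cons_self, hab⟩
    · obtain ⟨b, hb, hrb⟩ := ih x hx
      exact ⟨b, List.mem_cons_of_mem _ hb, hrb⟩

lemma pairwise_of_forall₂ {R : V → V → Prop} :
    ∀ {as bs : List (List V)}, List.Forall₂ List.Perm as bs →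
      bs.Pairwise (fun l₁ l₂ => ∀ x ∈ l₁, ∀ y ∈ l₂, R x y) →
      as.Pairwise (fun l₁ l₂ => ∀ x ∈ l₁, ∀ y ∈ l₂, R x y) := by
  intro as bs h
  induction h with
  | nil => intro _; exact List.Pairwise.nil
  | @cons a b as bs hab h ih =>
    intro hp
    rw [List.pairwise_cons] at hp ⊢
    refine ⟨?_, ih hp.2⟩
    intro l' hl' x hx y hy
    obtain ⟨b', hb', hrb⟩ := forall₂_mem_left h l' hl'
    exact hp.1 b' hb' x (hab.mem_iff.mp hx) y (hrb.mem_iff.mp hy)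

end Count


/--
Let `G = (V, E)` be a finite directed graph with a designated source `s`
from which every vertex is reachable.  For `i ≥ 1`, let `L_i` be the set of vertices of
`V \ {s}` with hop-distance exactly `i` from `s`, and let `d − 1` be the maximum
hop-distance from `s` to any vertex.  Then `ℓ(G, s) ≥ ∏_{i=1}^{d−1} (|L_i|)!`.
-/
theorem numLinearizations_ge_prod_factorial_levels
    [Fintype V] (E : V → V → Prop) (s : V)
    (hreach : ∀ v, DiReachable E s v)
    (d : ℕ) (hd : 1 ≤ d)
    (hdmax : IsGreatest {k | ∃ v, v ≠ s ∧ hopDist E s v = k} (d - 1)) :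
    numLinearizations E s ≥
      ∏ i ∈ Finset.Icc 1 (d - 1),
        Nat.factorial ({v : V | v ≠ s ∧ hopDist E s v = i}.ncard) := by
  classical
  set n := d - 1 with hn
  set layer : ℕ → Set V := fun i => {v | v ≠ s ∧ hopDist E s v = i} with hlayer
  have hfinlayer : ∀ i, (layer i).Finite := fun i => Set.toFinite _
  set base : ℕ → List V := fun i => (hfinlayer i).toFinset.toList with hbase
  have base_nodup : ∀ i, (base i).Nodup := fun i => Finset.nodup_toList _
  have mem_base : ∀ i v, v ∈ base i ↔ v ∈ layer i := by
    intro i v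
    rw [hbase]
    simp only [Finset.mem_toList, Set.Finite.mem_toFinset]
  have base_len : ∀ i, (base i).length = (layer i).ncard := by
    intro i
    rw [hbase]
    simp only [Finset.length_toList]
    rw [Set.ncard_eq_toFinset_card _ (hfinlayer i)]
  set bases : List (List V) := (List.range n).map (fun j => base (j+1)) with hbases
  have hop_le_n : ∀ v, v ≠ s → hopDist E s v ≤ n := fun v hv => hdmax.2 ⟨v, hv, rfl⟩
  have mem_flat : ∀ v, v ∈ bases.flatten ↔ v ≠ s := by
    intro v
    rw [List.mem_flatten]
    constructor
    · rintro ⟨l, hl, hvl⟩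
      rw [hbases, List.mem_map] at hl
      obtain ⟨j, hj, rfl⟩ := hl
      exact ((mem_base _ v).mp hvl).1
    · intro hv
      have h1 := hop_pos E s hreach hv
      have h2 := hop_le_n v hv
      refine ⟨base (hopDist E s v), ?_, (mem_base _ v).mpr ⟨hv, rfl⟩⟩
      rw [hbases, List.mem_map]
      exact ⟨hopDist E s v - 1, List.mem_range.mpr (by omega), by congr 1; omega⟩
  have bases_pairwise : bases.Pairwise
      (fun l₁ l₂ => ∀ x ∈ l₁, ∀ y ∈ l₂, hopDist E s x ≤ hopDist E s y) := by
    rw [hbases, List.pairwise_map]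
    refine (List.pairwise_lt_range (n := n)).imp ?_
    intro j j' hjj' x hx y hy
    have h1 := ((mem_base _ x).mp hx).2
    have h2 := ((mem_base _ y).mp hy).2
    omega
  have flat_nodup : bases.flatten.Nodup := by
    rw [List.nodup_flatten]
    constructor
    · intro l hl
      rw [hbases, List.mem_map] at hl
      obtain ⟨j, _, rfl⟩ := hl
      exact base_nodup _
    · rw [hbases, List.pairwise_map]
      refine (List.pairwise_lt_range (n := n)).imp ?_
      intro j j' hjj' x hx hy
      have h1 := ((mem_base _ x).mp hx).2
      have h2 := ((mem_base _ x).mp hy).2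
      omega
  have key : ∀ L ∈ concatF bases, IsLinearization E s L := by
    intro L hL
    obtain ⟨as, h₂, rfl⟩ := mem_concatF bases L hL
    have hperm : List.Perm as.flatten bases.flatten := List.Perm.flatten_congr h₂
    refine isLinearization_of_sorted E s hreach _ (hperm.nodup_iff.mpr flat_nodup)
      (fun v => (hperm.mem_iff).trans (mem_flat v)) ?_
    rw [List.pairwise_flatten]
    constructor
    · intro l hl
      obtain ⟨b, hb, hrb⟩ := forall₂_mem_left h₂ l hl
      rw [hbases, List.mem_map] at hb
      obtain ⟨j, _, rfl⟩ := hb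
      refine List.pairwise_of_forall_mem_list ?_
      intro x hx y hy
      have h1 := ((mem_base _ x).mp (hrb.mem_iff.mp hx)).2
      have h2 := ((mem_base _ y).mp (hrb.mem_iff.mp hy)).2
      omega
    · exact pairwise_of_forall₂ h₂ bases_pairwise
  have hfinS : {L : List V | IsLinearization E s L}.Finite := by
    refine Set.Finite.subset (bases.flatten.permutations.toFinset).finite_toSet ?_
    intro L hL
    obtain ⟨hnd, hm, _⟩ := hL
    rw [Finset.mem_coe, List.mem_toFinset, List.mem_permutations]
    refine List.perm_of_nodup_nodup_toFinset_eq hnd flat_nodup ?_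
    ext v
    rw [List.mem_toFinset, List.mem_toFinset, hm, mem_flat]
  have hsub : ↑(concatF bases) ⊆ {L : List V | IsLinearization E s L} :=
    fun L hL => key L hL
  have hcard : (concatF bases).card = ∏ i ∈ Finset.Icc 1 n, Nat.factorial ((layer i).ncard) := by
    rw [card_concatF bases (by
      intro b hb
      rw [hbases, List.mem_map] at hb
      obtain ⟨j, _, rfl⟩ := hb
      exact base_nodup _)]
    rw [hbases, List.map_map]
    have hlist : ∀ m : ℕ, ((List.range m).map
        ((fun b : List V => b.length.factorial) ∘ fun j => base (j+1))).prod =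
        ∏ j ∈ Finset.range m, Nat.factorial ((layer (j+1)).ncard) := by
      intro m
      induction m with
      | zero => simp
      | succ m ihm =>
        rw [List.prod_range_succ, Finset.prod_range_succ, ihm]
        simp only [Function.comp_apply, base_len]
    rw [hlist]
    have himg : Finset.Icc 1 n = (Finset.range n).image (· + 1) := by
      ext a
      simp only [Finset.mem_Icc, Finset.mem_image, Finset.mem_range]
      constructor
      · intro h; exact ⟨a - 1, by omega, by omega⟩
      · rintro ⟨x, hx, rfl⟩; omega
    rw [himg, Finset.prod_image (by intro a _ b _ h; simp only at h; omega)]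
  show numLinearizations E s ≥ ∏ i ∈ Finset.Icc 1 n, Nat.factorial ((layer i).ncard)
  calc numLinearizations E s = {L : List V | IsLinearization E s L}.ncard := rfl
  _ ≥ (↑(concatF bases) : Set (List V)).ncard := Set.ncard_le_ncard hsub hfinS
  _ = (concatF bases).card := Set.ncard_coe_finset _
  _ = ∏ i ∈ Finset.Icc 1 n, Nat.factorial ((layer i).ncard) := hcard
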